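/- arXiv:2105.06078 — 6 statements merged into one kernel-verified Lean document; each statement's English description precedes it below -/
import Mathlib

section
/- Let x ∈ ℝ satisfy |x| ≤ 1 (or more generally x^p ≤ p! a²/2 for all integers p ≥ 2, where a ≥ 0 is fixed). Then for 0 < t < 1, exp(tx) ≤ 1 + tx + t²a²/(2(1−t)). -/
/-- If `x^p ≤ p! a² / 2` for all integers `p ≥ 2` and `0 < t < 1`, then
`exp (t x) ≤ 1 + t x + t² a² / (2 (1 - t))`. -/
theorem exp_le_of_pow_le (a x t : ℝ) (ha : 0 ≤ a)
    (hx : ∀ p : ℕ, 2 ≤ p → x ^ p ≤ (p.factorial : ℝ) * a ^ 2 / 2)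
    (ht0 : 0 < t) (ht1 : t < 1) :
    Real.exp (t * x) ≤ 1 + t * x + t ^ 2 * a ^ 2 / (2 * (1 - t)) := by
  have ht1' : 0 < 1 - t := by linarith
  have hser : Real.exp (t * x) = ∑' n : ℕ, (t * x) ^ n / n.factorial := by
    rw [Real.exp_eq_exp_ℝ, NormedSpace.exp_eq_tsum_div]
  have hsum : Summable (fun n : ℕ => (t * x) ^ n / n.factorial) :=
    Real.summable_pow_div_factorial _
  have hgsum : Summable (fun n : ℕ => t ^ (n + 2) * (a ^ 2 / 2)) := by
    apply Summable.mul_right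
    exact (summable_geometric_of_lt_one ht0.le ht1).comp_injective (add_left_injective 2)
  have hgeom : (∑' n : ℕ, t ^ (n + 2) * (a ^ 2 / 2)) = t ^ 2 * a ^ 2 / (2 * (1 - t)) := by
    have h2 : (∑' n : ℕ, t ^ (n + 2)) = t ^ 2 / (1 - t) := by
      simp only [pow_add]
      rw [tsum_mul_right, tsum_geometric_of_lt_one ht0.le ht1]
      ring
    rw [tsum_mul_right, h2, div_mul_div_comm]
    ring_nf
  rw [hser]
  have hsplit := (Summable.sum_add_tsum_nat_add 2 hsum).symm
  rw [hsplit]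
  have hfin : (∑ i ∈ Finset.range 2, (t * x) ^ i / (i.factorial : ℝ)) = 1 + t * x := by
    simp [Finset.sum_range_succ, Nat.factorial]
  rw [hfin]
  gcongr 1 + t * x + ?_
  calc (∑' n : ℕ, (t * x) ^ (n + 2) / ((n + 2).factorial : ℝ))
      ≤ ∑' n : ℕ, t ^ (n + 2) * (a ^ 2 / 2) := by
        refine Summable.tsum_le_tsum (fun n => ?_) ((summable_nat_add_iff 2).mpr hsum) hgsum
        have hfac : (0 : ℝ) < ((n + 2).factorial : ℝ) := by positivity
        rw [mul_pow, div_le_iff₀ hfac]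
        calc t ^ (n + 2) * x ^ (n + 2)
            ≤ t ^ (n + 2) * (((n + 2).factorial : ℝ) * a ^ 2 / 2) := by
              exact mul_le_mul_of_nonneg_left (hx _ (by omega)) (pow_pos ht0 _).le
          _ = t ^ (n + 2) * (a ^ 2 / 2) * ((n + 2).factorial : ℝ) := by ring
    _ = t ^ 2 * a ^ 2 / (2 * (1 - t)) := hgeom
end

section
/- Let L₁ and L₂ be bounded square complex matrices, C = exp((L₁+L₂)/n), D = exp(L₁/n)·exp(L₂/n). Then ‖Cⁿ − Dⁿ‖ ≤ 2·exp(2‖L₁‖ + 2‖L₂‖)/n. Consequently, (exp(L₁/n)·exp(L₂/n))ⁿ → exp(L₁ + L₂) as n → ∞ (the Lie–Trotter product formula). -/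
/-!
With `a = L₁ / n`, `b = L₂ / n`, `C = exp (a + b)` and `D = exp a * exp b`, the telescoping
identity `Cⁿ - Dⁿ = ∑ Cⁱ (C - D) Dⁿ⁻¹⁻ⁱ` reduces everything to the single-step estimate
`‖C - D‖ ≤ (‖a‖ + ‖b‖)² e^(‖a‖ + ‖b‖)`, obtained by comparing the second-order Taylor remainders
of the three exponentials; multiplying by `C` or by `D` stretches norms by at most
`e^(‖a‖ + ‖b‖)`. Summing the `n` terms gives `O(1/n)`, and `Cⁿ = exp (L₁ + L₂)`.

A normed ring need not satisfy `‖1‖ = 1`, so `‖exp u‖ ≤ e^‖u‖` may fail; what does hold, termwise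
on the exponential series, is `‖exp u * v‖ ≤ e^‖u‖ ‖v‖`, and all estimates are phrased that way.
-/

open NormedSpace Filter
open scoped Nat

theorem norm_factorial_inv_smul {E : Type*} [SeminormedAddCommGroup E] [NormedSpace ℚ E]
    (k : ℕ) (x : E) : ‖(k !⁻¹ : ℚ) • x‖ = ‖x‖ / k ! := by
  simp [norm_smul, div_eq_inv_mul, ← Rat.norm_cast_real]

theorem norm_tsum_le_mul_exp {E : Type*} [SeminormedAddCommGroup E] {f : ℕ → E} {c x : ℝ}
    (hf : ∀ k, ‖f k‖ ≤ c * (x ^ k / k !)) : ‖∑' k, f k‖ ≤ c * Real.exp x := by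
  refine tsum_of_norm_bounded ?_ hf
  rw [Real.exp_eq_exp_ℝ]
  exact (expSeries_div_hasSum_exp x).mul_left c

section NormedRing

variable {A : Type*} [NormedRing A]

theorem norm_pow_mul_le_of_forall_norm_mul_le {x : A} {c : ℝ} (hc : 0 ≤ c)
    (hx : ∀ v, ‖x * v‖ ≤ c * ‖v‖) (k : ℕ) (v : A) : ‖x ^ k * v‖ ≤ c ^ k * ‖v‖ := by
  induction k with
  | zero => simp
  | succ k ih =>
    calc ‖x ^ (k + 1) * v‖ = ‖x * (x ^ k * v)‖ := by rw [pow_succ', mul_assoc]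
      _ ≤ c * (c ^ k * ‖v‖) := (hx _).trans (by gcongr)
      _ = c ^ (k + 1) * ‖v‖ := by ring

open MulOpposite in
theorem norm_mul_pow_le_of_forall_norm_mul_le {x : A} {c : ℝ} (hc : 0 ≤ c)
    (hx : ∀ v, ‖v * x‖ ≤ ‖v‖ * c) (k : ℕ) (v : A) : ‖v * x ^ k‖ ≤ ‖v‖ * c ^ k := by
  have hop (w : Aᵐᵒᵖ) : ‖op x * w‖ ≤ c * ‖w‖ := by
    rw [← op_unop w, ← op_mul, norm_op, norm_op, mul_comm c]
    exact hx _
  have h := norm_pow_mul_le_of_forall_norm_mul_le hc hop k (op v)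
  rwa [← op_pow, ← op_mul, norm_op, norm_op, mul_comm (c ^ k)] at h

theorem pow_sub_pow_eq_sum_pow_mul_sub_mul_pow (C D : A) (n : ℕ) :
    C ^ n - D ^ n = ∑ i ∈ Finset.range n, C ^ i * (C - D) * D ^ (n - 1 - i) := by
  have h := Finset.sum_range_sub (fun i => C ^ i * D ^ (n - i)) n
  simp only [Nat.sub_self, pow_zero, mul_one, Nat.sub_zero, one_mul] at h
  rw [← h]
  refine Finset.sum_congr rfl fun i hi => ?_
  obtain ⟨m, rfl⟩ := Nat.exists_eq_add_of_lt (Finset.mem_range.1 hi)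
  rw [show i + m + 1 - (i + 1) = m by omega, show i + m + 1 - 1 - i = m by omega,
    show i + m + 1 - i = m + 1 by omega, pow_succ, pow_succ']
  noncomm_ring

theorem norm_pow_sub_pow_le {C D : A} {c : ℝ} (hc : 0 ≤ c)
    (hC : ∀ v, ‖C * v‖ ≤ c * ‖v‖) (hD : ∀ v, ‖v * D‖ ≤ ‖v‖ * c) (n : ℕ) :
    ‖C ^ n - D ^ n‖ ≤ n * (c ^ (n - 1) * ‖C - D‖) := by
  have hterm (i : ℕ) (hi : i ∈ Finset.range n) :
      ‖C ^ i * (C - D) * D ^ (n - 1 - i)‖ ≤ c ^ (n - 1) * ‖C - D‖ := by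
    have hi : i + (n - 1 - i) = n - 1 := by have := Finset.mem_range.1 hi; omega
    calc ‖C ^ i * (C - D) * D ^ (n - 1 - i)‖ ≤ c ^ i * (‖C - D‖ * c ^ (n - 1 - i)) := by
          rw [mul_assoc]
          exact (norm_pow_mul_le_of_forall_norm_mul_le hc hC i _).trans
            (by gcongr; exact norm_mul_pow_le_of_forall_norm_mul_le hc hD _ _)
      _ = c ^ (i + (n - 1 - i)) * ‖C - D‖ := by ring
      _ = c ^ (n - 1) * ‖C - D‖ := by rw [hi]
  calc ‖C ^ n - D ^ n‖ ≤ ∑ i ∈ Finset.range n, ‖C ^ i * (C - D) * D ^ (n - 1 - i)‖ := by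
        rw [pow_sub_pow_eq_sum_pow_mul_sub_mul_pow]
        exact norm_sum_le _ _
    _ ≤ ∑ i ∈ Finset.range n, c ^ (n - 1) * ‖C - D‖ := Finset.sum_le_sum hterm
    _ = n * (c ^ (n - 1) * ‖C - D‖) := by simp

end NormedRing

section Exponential

variable {A : Type*} [NormedRing A] [NormedAlgebra ℚ A] [CompleteSpace A]

theorem norm_exp_mul_le (u v : A) : ‖exp u * v‖ ≤ Real.exp ‖u‖ * ‖v‖ := by
  rw [← (exp_series_hasSum_exp' (𝕂 := ℚ) u).tsum_eq,
    ← (expSeries_summable' (𝕂 := ℚ) u).tsum_mul_right, mul_comm]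
  refine norm_tsum_le_mul_exp fun k => ?_
  rw [smul_mul_assoc, norm_factorial_inv_smul, mul_div_assoc', mul_comm ‖v‖]
  gcongr
  exact norm_pow_mul_le_of_forall_norm_mul_le (norm_nonneg u) (norm_mul_le u) k v

open MulOpposite in
theorem norm_mul_exp_le (u v : A) : ‖v * exp u‖ ≤ ‖v‖ * Real.exp ‖u‖ := by
  have h := norm_exp_mul_le (op u) (op v)
  rwa [exp_op, ← op_mul, norm_op, norm_op, norm_op, mul_comm (Real.exp _)] at h

theorem norm_exp_sub_sum_range_le (u : A) {m : ℕ} (hm : 0 < m) :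
    ‖exp u - ∑ k ∈ Finset.range m, (k !⁻¹ : ℚ) • u ^ k‖ ≤ ‖u‖ ^ m / m ! * Real.exp ‖u‖ := by
  rw [← (exp_series_hasSum_exp' (𝕂 := ℚ) u).tsum_eq,
    ← (expSeries_summable' (𝕂 := ℚ) u).sum_add_tsum_nat_add m, add_sub_cancel_left]
  refine norm_tsum_le_mul_exp fun k => ?_
  have hfac : (k ! * m ! : ℝ) ≤ (k + m)! := by
    exact_mod_cast Nat.le_of_dvd (Nat.factorial_pos _)
      (Nat.factorial_mul_factorial_dvd_factorial_add k m)
  rw [norm_factorial_inv_smul]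
  calc ‖u ^ (k + m)‖ / (k + m)! ≤ ‖u‖ ^ (k + m) / (k ! * m !) := by
        gcongr
        exact norm_pow_le' u (by omega)
    _ = ‖u‖ ^ m / m ! * (‖u‖ ^ k / k !) := by rw [pow_add]; field_simp

theorem norm_exp_sub_one_le (u : A) : ‖exp u - 1‖ ≤ ‖u‖ * Real.exp ‖u‖ := by
  simpa using norm_exp_sub_sum_range_le u one_pos

theorem norm_exp_sub_one_sub_le (u : A) :
    ‖exp u - 1 - u‖ ≤ ‖u‖ ^ 2 / 2 * Real.exp ‖u‖ := by
  simpa [Finset.sum_range_succ, sub_sub] using norm_exp_sub_sum_range_le u (m := 2) two_pos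

theorem norm_exp_add_sub_exp_mul_exp_le (a b : A) :
    ‖exp (a + b) - exp a * exp b‖ ≤ (‖a‖ + ‖b‖) ^ 2 * Real.exp (‖a‖ + ‖b‖) := by
  set α := ‖a‖
  set β := ‖b‖
  have hab : ‖a + b‖ ≤ α + β := norm_add_le a b
  have hexp : Real.exp β ≤ Real.exp (α + β) := Real.exp_le_exp.2 (le_add_of_nonneg_left (norm_nonneg a))
  have hsplit : exp (a + b) - exp a * exp b = (exp (a + b) - 1 - (a + b)) -
      ((exp a - 1 - a) * exp b + a * (exp b - 1) + (exp b - 1 - b)) := by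
    noncomm_ring
  have h₁ : ‖exp (a + b) - 1 - (a + b)‖ ≤ (α + β) ^ 2 / 2 * Real.exp (α + β) :=
    (norm_exp_sub_one_sub_le _).trans (by gcongr)
  have h₂ : ‖(exp a - 1 - a) * exp b‖ ≤ α ^ 2 / 2 * Real.exp (α + β) := by
    refine (norm_mul_exp_le b _).trans ?_
    rw [Real.exp_add, ← mul_assoc]
    gcongr
    exact norm_exp_sub_one_sub_le a
  have h₃ : ‖a * (exp b - 1)‖ ≤ α * β * Real.exp (α + β) := by
    refine (norm_mul_le _ _).trans ?_
    rw [mul_assoc]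
    gcongr
    exact (norm_exp_sub_one_le b).trans (by gcongr)
  have h₄ : ‖exp b - 1 - b‖ ≤ β ^ 2 / 2 * Real.exp (α + β) :=
    (norm_exp_sub_one_sub_le b).trans (by gcongr)
  rw [hsplit]
  calc _ ≤ ‖exp (a + b) - 1 - (a + b)‖ +
        (‖(exp a - 1 - a) * exp b‖ + ‖a * (exp b - 1)‖ + ‖exp b - 1 - b‖) :=
        (norm_sub_le _ _).trans (by gcongr; exact norm_add₃_le)
    _ ≤ (α + β) ^ 2 / 2 * Real.exp (α + β) + (α ^ 2 / 2 * Real.exp (α + β) +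
        α * β * Real.exp (α + β) + β ^ 2 / 2 * Real.exp (α + β)) := by gcongr
    _ = (α + β) ^ 2 * Real.exp (α + β) := by ring

theorem norm_exp_add_pow_sub_exp_mul_exp_pow_le (a b : A) (n : ℕ) :
    ‖exp (a + b) ^ n - (exp a * exp b) ^ n‖ ≤
      n * (‖a‖ + ‖b‖) ^ 2 * Real.exp (n * (‖a‖ + ‖b‖)) := by
  set t := ‖a‖ + ‖b‖
  have hC (v : A) : ‖exp (a + b) * v‖ ≤ Real.exp t * ‖v‖ :=
    (norm_exp_mul_le _ v).trans (by gcongr; exact norm_add_le a b)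
  have hD (v : A) : ‖v * (exp a * exp b)‖ ≤ ‖v‖ * Real.exp t := by
    rw [← mul_assoc, Real.exp_add, ← mul_assoc]
    exact (norm_mul_exp_le b _).trans (by gcongr; exact norm_mul_exp_le a v)
  refine (norm_pow_sub_pow_le (Real.exp_pos t).le hC hD n).trans ?_
  rcases n.eq_zero_or_pos with rfl | hn
  · simp
  calc (n : ℝ) * (Real.exp t ^ (n - 1) * ‖exp (a + b) - exp a * exp b‖)
      ≤ n * (Real.exp t ^ (n - 1) * (t ^ 2 * Real.exp t)) := by
        gcongr
        exact norm_exp_add_sub_exp_mul_exp_le a b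
    _ = n * t ^ 2 * Real.exp t ^ (n - 1 + 1) := by ring
    _ = n * t ^ 2 * Real.exp (n * t) := by rw [Nat.sub_add_cancel hn, Real.exp_nat_mul]

end Exponential

section Scaled

variable {𝕜 A : Type*} [RCLike 𝕜] [NormedRing A] [NormedAlgebra 𝕜 A] [CompleteSpace A]

theorem norm_exp_inv_smul_pow_sub_le (L₁ L₂ : A) {n : ℕ} (hn : 0 < n) :
    ‖exp ((n : 𝕜)⁻¹ • (L₁ + L₂)) ^ n - (exp ((n : 𝕜)⁻¹ • L₁) * exp ((n : 𝕜)⁻¹ • L₂)) ^ n‖ ≤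
      2 * Real.exp (2 * ‖L₁‖ + 2 * ‖L₂‖) / n := by
  let _ : NormedAlgebra ℚ A := .restrictScalars ℚ 𝕜 A
  have hn' : (n : ℝ) ≠ 0 := by positivity
  have hnorm (L : A) : ‖(n : 𝕜)⁻¹ • L‖ = ‖L‖ / n := by
    rw [norm_smul, norm_inv, RCLike.norm_natCast, inv_mul_eq_div]
  set r := ‖L₁‖ + ‖L₂‖
  have hscaled : ‖(n : 𝕜)⁻¹ • L₁‖ + ‖(n : 𝕜)⁻¹ • L₂‖ = r / n := by
    rw [hnorm, hnorm, add_div]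
  have hr : r ^ 2 ≤ 2 * Real.exp r := by
    have hr₀ : 0 ≤ r := by positivity
    linarith [Real.quadratic_le_exp_of_nonneg hr₀]
  rw [smul_add]
  calc _ ≤ n * (r / n) ^ 2 * Real.exp (n * (r / n)) := by
        rw [← hscaled]
        exact norm_exp_add_pow_sub_exp_mul_exp_pow_le _ _ n
    _ = r ^ 2 / n * Real.exp r := by
        rw [mul_div_cancel₀ _ hn']
        field_simp
    _ ≤ 2 * Real.exp r / n * Real.exp r := by gcongr
    _ = 2 * Real.exp (2 * ‖L₁‖ + 2 * ‖L₂‖) / n := by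
        rw [show 2 * ‖L₁‖ + 2 * ‖L₂‖ = r + r by ring, Real.exp_add r r]
        ring

theorem exp_inv_smul_pow (L : A) {n : ℕ} (hn : 0 < n) : exp ((n : 𝕜)⁻¹ • L) ^ n = exp L := by
  let _ : NormedAlgebra ℚ A := .restrictScalars ℚ 𝕜 A
  rw [← exp_nsmul, ← Nat.cast_smul_eq_nsmul 𝕜, smul_smul,
    mul_inv_cancel₀ (by exact_mod_cast hn.ne'), one_smul]

end Scaled

/-- Lie–Trotter product formula with quantitative step: with
`C = exp((L₁+L₂)/n)` and `D = exp(L₁/n) * exp(L₂/n)`, one has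
`‖Cⁿ - Dⁿ‖ ≤ 2 exp(2‖L₁‖ + 2‖L₂‖)/n`, and consequently
`(exp(L₁/n) * exp(L₂/n))ⁿ → exp(L₁ + L₂)` as `n → ∞`. -/
theorem lie_trotter_product_formula {A : Type*} [NormedRing A] [NormedAlgebra ℂ A]
    [CompleteSpace A] (L₁ L₂ : A) :
    (∀ n : ℕ, 0 < n →
      ‖(exp ((n : ℂ)⁻¹ • (L₁ + L₂))) ^ n -
          (exp ((n : ℂ)⁻¹ • L₁) * exp ((n : ℂ)⁻¹ • L₂)) ^ n‖ ≤
        2 * Real.exp (2 * ‖L₁‖ + 2 * ‖L₂‖) / (n : ℝ)) ∧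
    Tendsto (fun n : ℕ => (exp ((n : ℂ)⁻¹ • L₁) * exp ((n : ℂ)⁻¹ • L₂)) ^ n)
      atTop (nhds (exp (L₁ + L₂))) := by
  refine ⟨fun n hn => norm_exp_inv_smul_pow_sub_le L₁ L₂ hn, ?_⟩
  rw [← tendsto_sub_nhds_zero_iff]
  refine squeeze_zero_norm' ?_
    (tendsto_const_div_atTop_nhds_zero_nat (2 * Real.exp (2 * ‖L₁‖ + 2 * ‖L₂‖)))
  filter_upwards [eventually_gt_atTop 0] with n hn
  rw [← exp_inv_smul_pow (𝕜 := ℂ) (L₁ + L₂) hn, norm_sub_rev]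
  exact norm_exp_inv_smul_pow_sub_le L₁ L₂ hn
end

section
/- Let A₁,…,A_m be n×n complex matrices with singular values σ₁(·) ≥ σ₂(·) ≥ ⋯, let s ≥ 1 and k ∈ {1,…,n}, and let p₁,…,p_m be positive reals with Σ_{i=1}^m 1/p_i = 1. Then Σ_{j=1}^k σ_j(A₁⋯A_m)^s ≤ ∏_{i=1}^m (Σ_{j=1}^k σ_j(A_i)^{s p_i})^{1/p_i} ≤ Σ_{i=1}^m (1/p_i) Σ_{j=1}^k σ_j(A_i)^{s p_i}. -/
/-- Sorted (descending) eigenvalues of a Hermitian matrix. -/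
noncomputable def eigsDesc {n : ℕ} {A : Matrix (Fin n) (Fin n) ℂ} (hA : A.IsHermitian) :
    Fin n → ℝ :=
  fun j => hA.eigenvalues (Tuple.sort hA.eigenvalues j.rev)

/-- The singular values of a square complex matrix, in descending order:
`svals A j` is the `(j+1)`-st largest singular value of `A`. -/
noncomputable def svals {n : ℕ} (A : Matrix (Fin n) (Fin n) ℂ) : Fin n → ℝ :=
  fun j => Real.sqrt (eigsDesc (Matrix.isHermitian_conjTranspose_mul_self A) j)

/-!
The `l`-th compound matrix `C_l(A)`, the matrix of `Λ^l A` whose entries are the `l × l` minors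
of `A`, is multiplicative by the Cauchy–Binet formula. Its operator norm is `σ₁(A) ⋯ σ_l(A)`:
`‖C_l(A)‖² = ‖C_l(AᴴA)‖`, and writing `AᴴA = V D Vᴴ` with `V` unitary, `C_l(V)` is unitary while
`C_l(D)` is diagonal with entries the products of `l` eigenvalues of `AᴴA`. Submultiplicativity of
the norm gives Horn's inequality `∏_{j<l} σ_j(A₁⋯A_m) ≤ ∏_i ∏_{j<l} σ_j(A_i)` for every `l`. This
log-majorization survives raising to the power `s ≥ 0` and implies weak majorization of the sums:
by Abel summation, `∑ (x_j - y_j) ≤ ∑ x_j (log x_j - log y_j) ≤ 0` for `x` decreasing. Hölder's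
inequality for `m` factors bounds `∑_j ∏_i σ_j(A_i)^s`, and weighted AM–GM gives the second
inequality.
-/

open Finset Function Equiv

lemma sum_range_mul_nonpos_of_antitone {x c : ℕ → ℝ} {k : ℕ} (hx : Antitone x)
    (hx0 : ∀ j, 0 ≤ x j) (hc : ∀ l ≤ k, ∑ j ∈ range l, c j ≤ 0) :
    ∑ j ∈ range k, x j * c j ≤ 0 := by
  suffices h : ∀ l ≤ k, ∑ j ∈ range l, x j * c j ≤ x l * ∑ j ∈ range l, c j from
    (h k le_rfl).trans (mul_nonpos_of_nonneg_of_nonpos (hx0 k) (hc k le_rfl))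
  intro l hl
  induction l with
  | zero => simp
  | succ l ih =>
    have hsum := hc (l + 1) hl
    rw [sum_range_succ] at hsum
    rw [sum_range_succ, sum_range_succ]
    linarith [ih (by omega), mul_nonpos_of_nonneg_of_nonpos (sub_nonneg.2 (hx l.le_succ)) hsum]

lemma sum_range_le_of_prod_range_le_of_pos {x y : ℕ → ℝ} {k : ℕ} (hx : Antitone x)
    (hx0 : ∀ j, 0 ≤ x j) (hxk : ∀ j < k, 0 < x j) (hy0 : ∀ j, 0 ≤ y j)
    (h : ∀ l ≤ k, ∏ j ∈ range l, x j ≤ ∏ j ∈ range l, y j) :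
    ∑ j ∈ range k, x j ≤ ∑ j ∈ range k, y j := by
  have hxl {l} (hl : l ≤ k) : 0 < ∏ j ∈ range l, x j :=
    prod_pos fun j hj => hxk j ((mem_range.1 hj).trans_le hl)
  have hyk (j) (hj : j < k) : 0 < y j := by
    refine (hy0 j).lt_of_ne' fun hyj => ?_
    have := (hxl hj).trans_le (h (j + 1) hj)
    rw [prod_range_succ, hyj, mul_zero] at this
    exact this.false
  have hc (l) (hl : l ≤ k) : ∑ j ∈ range l, (Real.log (x j) - Real.log (y j)) ≤ 0 := by
    have hmem {j} (hj : j ∈ range l) : j < k := (mem_range.1 hj).trans_le hl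
    rw [sum_sub_distrib, ← Real.log_prod fun j hj => (hxk j (hmem hj)).ne',
      ← Real.log_prod fun j hj => (hyk j (hmem hj)).ne', sub_nonpos]
    exact Real.log_le_log (hxl hl) (h l hl)
  have hterm (j) (hj : j ∈ range k) : x j - y j ≤ x j * (Real.log (x j) - Real.log (y j)) := by
    have hxj := hxk j (mem_range.1 hj)
    have hyj := hyk j (mem_range.1 hj)
    have hlog := Real.one_sub_inv_le_log_of_pos (div_pos hxj hyj)
    rw [inv_div, Real.log_div hxj.ne' hyj.ne'] at hlog
    calc x j - y j = x j * (1 - y j / x j) := by field_simp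
      _ ≤ _ := mul_le_mul_of_nonneg_left hlog hxj.le
  have := (sum_le_sum hterm).trans (sum_range_mul_nonpos_of_antitone hx hx0 hc)
  rw [sum_sub_distrib] at this
  linarith

theorem sum_range_le_of_prod_range_le {x y : ℕ → ℝ} {k : ℕ} (hx : Antitone x)
    (hx0 : ∀ j, 0 ≤ x j) (hy0 : ∀ j, 0 ≤ y j)
    (h : ∀ l ≤ k, ∏ j ∈ range l, x j ≤ ∏ j ∈ range l, y j) :
    ∑ j ∈ range k, x j ≤ ∑ j ∈ range k, y j := by
  induction k with
  | zero => simp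
  | succ k ih =>
    rcases (hx0 k).eq_or_lt with hxk | hxk
    · rw [sum_range_succ, sum_range_succ, ← hxk]
      linarith [ih fun l hl => h l (by omega), hy0 k]
    · exact sum_range_le_of_prod_range_le_of_pos hx hx0
        (fun j hj => hxk.trans_le (hx (by omega))) hy0 h

theorem Real.sum_prod_le_prod_rpow_sum {ι κ : Type*} [Fintype κ] (s : Finset ι)
    {f : ι → κ → ℝ} (hf : ∀ i ∈ s, ∀ j, 0 ≤ f i j) {p : ι → ℝ} (hp : ∀ i ∈ s, 0 < p i)
    (hpsum : ∑ i ∈ s, 1 / p i = 1) :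
    ∑ j, ∏ i ∈ s, f i j ≤ ∏ i ∈ s, (∑ j, f i j ^ p i) ^ (1 / p i) := by
  let : MeasurableSpace κ := ⊤
  have : DiscreteMeasurableSpace κ := ⟨fun _ => trivial⟩
  have hfp : ∀ i ∈ s, 0 ≤ ∑ j, f i j ^ p i := fun i hi =>
    sum_nonneg fun j _ => rpow_nonneg (hf i hi j) _
  have key := ENNReal.lintegral_prod_norm_pow_le (μ := MeasureTheory.Measure.count) s
    (f := fun i j => ENNReal.ofReal (f i j ^ p i)) (fun i _ => .of_discrete) hpsum
    (fun i hi => (one_div_pos.2 (hp i hi)).le)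
  simp only [MeasureTheory.lintegral_fintype, MeasureTheory.Measure.count_singleton, mul_one] at key
  rw [← ENNReal.ofReal_le_ofReal_iff (prod_nonneg fun i hi => rpow_nonneg (hfp i hi) _)]
  convert key using 1
  · rw [ENNReal.ofReal_sum_of_nonneg fun j _ => prod_nonneg fun i hi => hf i hi j]
    refine sum_congr rfl fun j _ => ?_
    rw [ENNReal.ofReal_prod_of_nonneg fun i hi => hf i hi j]
    refine prod_congr rfl fun i hi => ?_
    rw [ENNReal.ofReal_rpow_of_nonneg (rpow_nonneg (hf i hi j) _) (one_div_pos.2 (hp i hi)).le,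
      ← rpow_mul (hf i hi j), mul_one_div_cancel (hp i hi).ne', rpow_one]
  · rw [ENNReal.ofReal_prod_of_nonneg fun i hi => rpow_nonneg (hfp i hi) _]
    refine prod_congr rfl fun i hi => ?_
    rw [← ENNReal.ofReal_rpow_of_nonneg (hfp i hi) (one_div_pos.2 (hp i hi)).le,
      ENNReal.ofReal_sum_of_nonneg fun j _ => rpow_nonneg (hf i hi j) _]

abbrev CardSubset (n l : ℕ) := {s : Finset (Fin n) // s.card = l}

namespace CardSubset

variable {n l : ℕ}

noncomputable def enum (S : CardSubset n l) : Fin l ↪o Fin n := S.1.orderEmbOfFin S.2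

lemma range_enum (S : CardSubset n l) : Set.range S.enum = S.1 := range_orderEmbOfFin _ _

lemma enum_mem (S : CardSubset n l) (i : Fin l) : S.enum i ∈ S.1 := orderEmbOfFin_mem _ _ _

lemma prod_enum {M : Type*} [CommMonoid M] (S : CardSubset n l) (f : Fin n → M) :
    ∏ i, f (S.enum i) = ∏ x ∈ S.1, f x := by
  rw [← S.1.image_orderEmbOfFin_univ S.2]
  exact (prod_image fun i _ j _ h => S.enum.injective h).symm

lemma exists_enum_notMem {S T : CardSubset n l} (h : S ≠ T) : ∃ i, S.enum i ∉ T.1 := by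
  obtain ⟨x, hxS, hxT⟩ := not_subset.1 fun hST =>
    h (Subtype.ext (eq_of_subset_of_card_le hST (by rw [S.2, T.2])))
  obtain ⟨i, rfl⟩ : x ∈ Set.range S.enum := by rwa [range_enum]
  exact ⟨i, hxT⟩

lemma card_eq : Fintype.card (CardSubset n l) = n.choose l := by
  rw [Fintype.card_subtype, ← powerset_univ, ← powersetCard_eq_filter, card_powersetCard, card_univ,
    Fintype.card_fin]

lemma bijective_enum_comp_perm :
    Bijective (fun P : CardSubset n l × Perm (Fin l) =>
      (⟨P.1.enum ∘ P.2, P.1.enum.injective.comp P.2.injective⟩ :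
        {f : Fin l → Fin n // Injective f})) := by
  refine (Fintype.bijective_iff_injective_and_card _).2 ⟨?_, ?_⟩
  · rintro ⟨S, σ⟩ ⟨T, τ⟩ h
    have h : S.enum ∘ σ = T.enum ∘ τ := congrArg Subtype.val h
    obtain rfl : S = T := by
      have := congrArg Set.range h
      rwa [Set.range_comp, Set.range_comp, σ.range_eq_univ, τ.range_eq_univ, Set.image_univ,
        Set.image_univ, range_enum, range_enum, coe_inj, ← Subtype.ext_iff] at this
    simp only [Prod.mk.injEq, true_and]
    exact Equiv.ext fun i => S.enum.injective (congrFun h i)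
  · rw [Fintype.card_prod, Fintype.card_perm, Fintype.card_fin, card_eq,
      Fintype.card_congr (subtypeInjectiveEquivEmbedding _ _), Fintype.card_embedding_eq,
      Fintype.card_fin, Fintype.card_fin, Nat.descFactorial_eq_factorial_mul_choose, mul_comm]

lemma prod_le_prod_castLE {ν : Fin n → ℝ} (hν : Antitone ν)
    (hν0 : ∀ i, 0 ≤ ν i) (hl : l ≤ n) (S : CardSubset n l) :
    ∏ x ∈ S.1, ν x ≤ ∏ j : Fin l, ν (Fin.castLE hl j) := by
  rw [← S.prod_enum]
  refine prod_le_prod (fun j _ => hν0 _) fun j _ => hν ?_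
  -- `S.enum` maps the indices below `j` injectively to indices below `S.enum j`
  have := card_le_card_of_injOn S.enum (s := Iio j) (t := Iio (S.enum j))
    (fun i hi => by simpa using S.enum.strictMono (by simpa using hi)) S.enum.injective.injOn
  simpa [Fin.le_def] using this

lemma isGreatest_prod {μ : Fin n → ℝ} (hμ0 : ∀ i, 0 ≤ μ i)
    {ρ : Perm (Fin n)} (hρ : Antitone (μ ∘ ρ)) (hl : l ≤ n) :
    IsGreatest (Set.range fun S : CardSubset n l => ∏ x ∈ S.1, μ x)
      (∏ j : Fin l, μ (ρ (Fin.castLE hl j))) := by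
  refine ⟨⟨⟨(univ.map (Fin.castLEEmb hl)).map ρ.toEmbedding, by simp⟩, ?_⟩, ?_⟩
  · simp [prod_map]
  · rintro _ ⟨S, rfl⟩
    have h := prod_le_prod_castLE hρ (fun i => hμ0 _) hl
      ⟨S.1.map ρ.symm.toEmbedding, by simp [S.2]⟩
    simpa [prod_map] using h

end CardSubset

namespace Matrix

variable {R : Type*} [CommRing R] {n l : ℕ}

lemma det_mul_eq_sum_prod_mul_det (M : Matrix (Fin l) (Fin n) R) (N : Matrix (Fin n) (Fin l) R) :
    (M * N).det = ∑ f : Fin l → Fin n, (∏ i, M i (f i)) * (N.submatrix f id).det := by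
  have hrows : M * N = fun i => ∑ j, M i j • N j := by
    ext i j
    simp [mul_apply, Finset.sum_apply]
  change detRowAlternating.toMultilinearMap (M * N) = _
  rw [hrows, MultilinearMap.map_sum]
  refine sum_congr rfl fun f _ => ?_
  rw [MultilinearMap.map_smul_univ]
  rfl

theorem det_mul_eq_sum_det_mul_det (M : Matrix (Fin l) (Fin n) R) (N : Matrix (Fin n) (Fin l) R) :
    (M * N).det =
      ∑ S : CardSubset n l, (M.submatrix id S.enum).det * (N.submatrix S.enum id).det := by
  classical
  rw [det_mul_eq_sum_prod_mul_det, ← sum_filter_of_ne (p := Injective) fun f _ hf => ?_,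
    sum_subtype (p := Injective) _ (fun _ => by simp),
    ← Fintype.sum_bijective _ CardSubset.bijective_enum_comp_perm _ _ fun _ => rfl,
    Fintype.sum_prod_type]
  · refine sum_congr rfl fun S _ => ?_
    have hperm (σ : Perm (Fin l)) : (N.submatrix (S.enum ∘ σ) id).det =
        Perm.sign σ * (N.submatrix S.enum id).det := det_permute σ (N.submatrix S.enum id)
    rw [← det_transpose (M.submatrix id S.enum), det_apply' (M.submatrix id S.enum)ᵀ, sum_mul]
    refine sum_congr rfl fun σ _ => ?_
    simp only [hperm, Function.comp_apply, transpose_apply, submatrix_apply, id]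
    ring
  · contrapose! hf
    obtain ⟨i, j, hfij, hij⟩ := not_injective_iff.1 hf
    rw [det_zero_of_row_eq hij (by ext; simp [hfij]), mul_zero]

/-- The matrix of `Λ^l A` in the basis `e_{i₁} ∧ ⋯ ∧ e_{iₗ}`, `i₁ < ⋯ < iₗ`. -/
noncomputable def compound (l : ℕ) (A : Matrix (Fin n) (Fin n) R) :
    Matrix (CardSubset n l) (CardSubset n l) R :=
  of fun S T => (A.submatrix S.enum T.enum).det

lemma compound_mul (A B : Matrix (Fin n) (Fin n) R) :
    compound l (A * B) = compound l A * compound l B := by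
  ext S T
  rw [compound, of_apply, submatrix_mul A B S.enum id T.enum bijective_id,
    det_mul_eq_sum_det_mul_det]
  rfl

lemma compound_diagonal (d : Fin n → R) :
    compound l (diagonal d) = diagonal fun S => ∏ x ∈ S.1, d x := by
  ext S T
  rcases eq_or_ne S T with rfl | hST
  · rw [compound, of_apply, submatrix_diagonal d S.enum S.enum.injective, det_diagonal,
      diagonal_apply_eq, ← CardSubset.prod_enum]
    rfl
  · obtain ⟨i, hi⟩ := CardSubset.exists_enum_notMem hST
    rw [compound, of_apply, diagonal_apply_ne _ hST]
    refine det_eq_zero_of_row_eq_zero i fun j => diagonal_apply_ne _ fun h => hi ?_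
    exact h ▸ T.enum_mem j

lemma compound_one : compound l (1 : Matrix (Fin n) (Fin n) R) = 1 := by
  rw [← diagonal_one, compound_diagonal]
  simp

noncomputable def compoundHom (l : ℕ) :
    Matrix (Fin n) (Fin n) R →* Matrix (CardSubset n l) (CardSubset n l) R where
  toFun := compound l
  map_one' := compound_one
  map_mul' := compound_mul

lemma compound_conjTranspose [StarRing R] (A : Matrix (Fin n) (Fin n) R) :
    compound l Aᴴ = (compound l A)ᴴ := by
  ext S T
  rw [compound, of_apply, conjTranspose_apply, compound, of_apply, ← det_conjTranspose]
  rfl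

lemma compound_mem_unitaryGroup [StarRing R] {U : Matrix (Fin n) (Fin n) R}
    (hU : U ∈ unitaryGroup (Fin n) R) : compound l U ∈ unitaryGroup (CardSubset n l) R := by
  rw [mem_unitaryGroup_iff, star_eq_conjTranspose, ← compound_conjTranspose, ← compound_mul,
    ← star_eq_conjTranspose, mem_unitaryGroup_iff.1 hU, compound_one]

end Matrix

section SingularValues

open Matrix
open scoped Matrix.Norms.L2Operator ComplexOrder

variable {n : ℕ}

lemma eigsDesc_antitone {A : Matrix (Fin n) (Fin n) ℂ} (hA : A.IsHermitian) :
    Antitone (eigsDesc hA) :=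
  fun _ _ hij => Tuple.monotone_sort _ (Fin.rev_le_rev.2 hij)

lemma exists_perm_eigsDesc_eq {A : Matrix (Fin n) (Fin n) ℂ} (hA : A.IsHermitian) :
    ∃ ρ : Perm (Fin n), eigsDesc hA = hA.eigenvalues ∘ ρ :=
  ⟨Fin.revPerm.trans (Tuple.sort _), rfl⟩

noncomputable def svalsSeq (A : Matrix (Fin n) (Fin n) ℂ) (j : ℕ) : ℝ :=
  if h : j < n then svals A ⟨j, h⟩ else 0

lemma svalsSeq_of_lt (A : Matrix (Fin n) (Fin n) ℂ) {j : ℕ} (h : j < n) :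
    svalsSeq A j = svals A ⟨j, h⟩ :=
  dif_pos h

lemma svalsSeq_val (A : Matrix (Fin n) (Fin n) ℂ) (j : Fin n) : svalsSeq A j = svals A j :=
  dif_pos j.2

lemma svalsSeq_nonneg (A : Matrix (Fin n) (Fin n) ℂ) (j : ℕ) : 0 ≤ svalsSeq A j := by
  unfold svalsSeq
  split_ifs
  exacts [Real.sqrt_nonneg _, le_rfl]

lemma svalsSeq_antitone (A : Matrix (Fin n) (Fin n) ℂ) : Antitone (svalsSeq A) := by
  intro i j hij
  by_cases hj : j < n
  · rw [svalsSeq_of_lt A hj, svalsSeq_of_lt A (hij.trans_lt hj)]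
    exact Real.sqrt_le_sqrt (eigsDesc_antitone _ hij)
  · rw [svalsSeq, dif_neg hj]
    exact svalsSeq_nonneg A i

theorem norm_compound (A : Matrix (Fin n) (Fin n) ℂ) {l : ℕ} (hl : l ≤ n) :
    ‖compound l A‖ = ∏ j ∈ range l, svalsSeq A j := by
  have hH := isHermitian_conjTranspose_mul_self A
  have hμ0 : ∀ i, 0 ≤ hH.eigenvalues i := (posSemidef_conjTranspose_mul_self A).eigenvalues_nonneg
  obtain ⟨ρ, hρ⟩ := exists_perm_eigsDesc_eq hH
  obtain ⟨⟨S₀, hS₀⟩, hle⟩ := CardSubset.isGreatest_prod hμ0 (hρ ▸ eigsDesc_antitone hH) hl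
  have hentry (S : CardSubset n l) :
      ‖∏ x ∈ S.1, (RCLike.ofReal ∘ hH.eigenvalues : Fin n → ℂ) x‖ =
        ∏ x ∈ S.1, hH.eigenvalues x := by
    simp only [Function.comp_apply]
    rw [← RCLike.ofReal_prod (K := ℂ), RCLike.norm_ofReal,
      abs_of_nonneg (prod_nonneg fun x _ => hμ0 x)]
  have hdiag : ‖compound l (diagonal (RCLike.ofReal ∘ hH.eigenvalues : Fin n → ℂ))‖ =
      ∏ j : Fin l, hH.eigenvalues (ρ (Fin.castLE hl j)) := by
    rw [compound_diagonal, l2_opNorm_diagonal]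
    refine le_antisymm ((pi_norm_le_iff_of_nonneg (hS₀ ▸ prod_nonneg fun x _ => hμ0 x)).2
      fun S => ?_) ?_
    · exact (hentry S).trans_le (hle ⟨S, rfl⟩)
    · exact hS₀ ▸ (hentry S₀).symm.trans_le (norm_le_pi_norm (fun S : CardSubset n l =>
      ∏ x ∈ S.1, (RCLike.ofReal ∘ hH.eigenvalues : Fin n → ℂ) x) S₀)
  have hsq : ‖compound l A‖ * ‖compound l A‖ = ∏ j ∈ range l, svalsSeq A j ^ 2 := by
    have hV := compound_mem_unitaryGroup (l := l) hH.eigenvectorUnitary.2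
    have hV' := compound_mem_unitaryGroup (l := l) (Unitary.star_mem hH.eigenvectorUnitary.2)
    rw [← l2_opNorm_conjTranspose_mul_self, ← compound_conjTranspose, ← compound_mul,
      hH.spectral_theorem, Unitary.conjStarAlgAut_apply, compound_mul, compound_mul,
      CStarRing.norm_mul_mem_unitary _ hV', CStarRing.norm_mem_unitary_mul _ hV, hdiag,
      ← Fin.prod_univ_eq_prod_range]
    refine prod_congr rfl fun j _ => ?_
    rw [svalsSeq_of_lt A (j.2.trans_le hl), svals, Real.sq_sqrt (hρ ▸ hμ0 _), hρ]
    rfl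
  rw [← sq_eq_sq₀ (norm_nonneg _) (prod_nonneg fun j _ => svalsSeq_nonneg A j), sq, hsq, prod_pow]

theorem prod_svalsSeq_ofFn_prod_le {n m : ℕ} (A : Fin m → Matrix (Fin n) (Fin n) ℂ) {l : ℕ}
    (hl : l ≤ n) :
    ∏ j ∈ range l, svalsSeq (List.ofFn A).prod j ≤ ∏ i, ∏ j ∈ range l, svalsSeq (A i) j := by
  have : Nonempty (CardSubset n l) := ⟨⟨univ.map (Fin.castLEEmb hl), by simp⟩⟩
  simp only [← norm_compound _ hl]
  calc ‖compound l (List.ofFn A).prod‖ = ‖((List.ofFn A).map (compoundHom l)).prod‖ := by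
        rw [← map_list_prod]
        rfl
    _ ≤ (((List.ofFn A).map (compoundHom l)).map norm).prod := List.norm_prod_le _
    _ = ∏ i, ‖compound l (A i)‖ := by
        rw [List.map_map, List.map_ofFn, List.prod_ofFn]
        rfl

theorem sum_svalsSeq_ofFn_prod_rpow_le {n m : ℕ} (A : Fin m → Matrix (Fin n) (Fin n) ℂ)
    {s : ℝ} (hs : 0 ≤ s) {k : ℕ} (hk : k ≤ n) :
    ∑ j ∈ range k, svalsSeq (List.ofFn A).prod j ^ s ≤
      ∑ j ∈ range k, ∏ i, svalsSeq (A i) j ^ s := by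
  have hpow (B : Matrix (Fin n) (Fin n) ℂ) (j : ℕ) : 0 ≤ svalsSeq B j ^ s :=
    Real.rpow_nonneg (svalsSeq_nonneg B j) s
  refine sum_range_le_of_prod_range_le
    (fun i j hij => Real.rpow_le_rpow (svalsSeq_nonneg _ _) (svalsSeq_antitone _ hij) hs)
    (hpow _) (fun j => prod_nonneg fun i _ => hpow _ j) fun l hl => ?_
  simp only [Real.finsetProd_rpow _ _ fun _ _ => svalsSeq_nonneg _ _]
  rw [Real.finsetProd_rpow _ _ fun _ _ => prod_nonneg fun _ _ => svalsSeq_nonneg _ _, prod_comm]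
  exact Real.rpow_le_rpow (prod_nonneg fun _ _ => svalsSeq_nonneg _ _)
    (prod_svalsSeq_ofFn_prod_le A (hl.trans hk)) hs

end SingularValues

theorem ky_fan_product_holder_general {n m : ℕ}
    (A : Fin m → Matrix (Fin n) (Fin n) ℂ) (s : ℝ) (hs : 1 ≤ s)
    (k : ℕ) (hk : k ≤ n) (p : Fin m → ℝ) (hp : ∀ i, 0 < p i)
    (hpsum : ∑ i, 1 / p i = 1) :
    (∑ j : Fin k, svals (List.ofFn A).prod (Fin.castLE hk j) ^ s ≤
      ∏ i, (∑ j : Fin k, svals (A i) (Fin.castLE hk j) ^ (s * p i)) ^ (1 / p i)) ∧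
    (∏ i, (∑ j : Fin k, svals (A i) (Fin.castLE hk j) ^ (s * p i)) ^ (1 / p i) ≤
      ∑ i, (1 / p i) * ∑ j : Fin k, svals (A i) (Fin.castLE hk j) ^ (s * p i)) := by
  simp only [← svalsSeq_val, Fin.val_castLE]
  refine ⟨?_, Real.geom_mean_le_arith_mean_weighted univ _ _
    (fun i _ => (one_div_pos.2 (hp i)).le) hpsum
    fun i _ => sum_nonneg fun j _ => Real.rpow_nonneg (svalsSeq_nonneg _ _) _⟩
  calc ∑ j : Fin k, svalsSeq (List.ofFn A).prod j ^ s
      ≤ ∑ j : Fin k, ∏ i, svalsSeq (A i) j ^ s := by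
        simpa only [Fin.sum_univ_eq_sum_range (fun j => svalsSeq (List.ofFn A).prod j ^ s),
          Fin.sum_univ_eq_sum_range (fun j => ∏ i, svalsSeq (A i) j ^ s)]
          using sum_svalsSeq_ofFn_prod_rpow_le A (zero_le_one.trans hs) hk
    _ ≤ ∏ i, (∑ j : Fin k, (svalsSeq (A i) j ^ s) ^ p i) ^ (1 / p i) :=
        Real.sum_prod_le_prod_rpow_sum univ
          (fun i _ j => Real.rpow_nonneg (svalsSeq_nonneg _ _) s) (fun i _ => hp i) hpsum
    _ = ∏ i, (∑ j : Fin k, svalsSeq (A i) j ^ (s * p i)) ^ (1 / p i) := by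
        simp only [← Real.rpow_mul (svalsSeq_nonneg _ _)]

/-- Hölder-type inequality for Ky Fan `k`-norms of products:
`Σ_{j≤k} σ_j(A₁⋯A_m)^s ≤ ∏_i (Σ_{j≤k} σ_j(A_i)^{s p_i})^{1/p_i}
  ≤ Σ_i (1/p_i) Σ_{j≤k} σ_j(A_i)^{s p_i}`,
where `p_i > 0` with `Σ 1/p_i = 1` and `s ≥ 1`. -/
theorem ky_fan_product_holder {n m : ℕ} (hm : 0 < m)
    (A : Fin m → Matrix (Fin n) (Fin n) ℂ) (s : ℝ) (hs : 1 ≤ s)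
    (k : ℕ) (hk : k ≤ n) (p : Fin m → ℝ) (hp : ∀ i, 0 < p i)
    (hpsum : ∑ i, 1 / p i = 1) :
    (∑ j : Fin k, svals (List.ofFn A).prod (Fin.castLE hk j) ^ s ≤
      ∏ i, (∑ j : Fin k, svals (A i) (Fin.castLE hk j) ^ (s * p i)) ^ (1 / p i)) ∧
    (∏ i, (∑ j : Fin k, svals (A i) (Fin.castLE hk j) ^ (s * p i)) ^ (1 / p i) ≤
      ∑ i, (1 / p i) * ∑ j : Fin k, svals (A i) (Fin.castLE hk j) ^ (s * p i)) :=
  ky_fan_product_holder_general A s hs k hk p hp hpsum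
end

section
/- Let x, y ∈ ℝ^r_{>0} be decreasingly ordered with x log-majorized by y (∏_{i≤k} x_i ≤ ∏_{i≤k} y_i for k < r and equality at k = r). Let y^{(n)} be a sequence of decreasingly ordered positive vectors converging to y. Then there exist n₀ ∈ ℕ and decreasingly ordered positive vectors x^{(n)} for n ≥ n₀ converging to x such that x^{(n)} is log-majorized by y^{(n)} for all n ≥ n₀. -/
open Filter

noncomputable def Lg (r : ℕ) (v : Fin r → ℝ) (k : ℕ) : ℝ :=
  ∑ j ∈ Finset.range k, if h : j < r then Real.log (v ⟨j, h⟩) else 0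

lemma Lg_zero (r : ℕ) (v : Fin r → ℝ) : Lg r v 0 = 0 := by simp [Lg]

lemma Lg_succ {r k : ℕ} (v : Fin r → ℝ) (hk : k < r) :
    Lg r v (k + 1) = Lg r v k + Real.log (v ⟨k, hk⟩) := by
  rw [Lg, Finset.sum_range_succ, dif_pos hk]; rfl

lemma prod_eq_exp {r k : ℕ} (v : Fin r → ℝ) (hv : ∀ i, 0 < v i) (hk : k ≤ r) :
    ∏ j : Fin k, v (Fin.castLE hk j) = Real.exp (Lg r v k) := by
  rw [Lg, Real.exp_sum,
    ← Fin.prod_univ_eq_prod_range (fun j => Real.exp (if h : j < r then Real.log (v ⟨j, h⟩) else 0)) k]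
  apply Finset.prod_congr rfl
  intro j _
  have hj : (j : ℕ) < r := lt_of_lt_of_le j.isLt hk
  rw [dif_pos hj, Real.exp_log (hv _)]
  rfl

/-- Stability of log-majorization under approximation: if `x ≺_log y` (decreasingly
ordered positive vectors, with equality of full products) and `y⁽ⁿ⁾ → y` is a sequence
of decreasingly ordered positive vectors, then there are `n₀` and decreasingly ordered
positive vectors `x⁽ⁿ⁾ → x` with `x⁽ⁿ⁾ ≺_log y⁽ⁿ⁾` for all `n ≥ n₀`. -/
theorem log_majorization_approx {r : ℕ} (x y : Fin r → ℝ)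
    (hxpos : ∀ i, 0 < x i) (hypos : ∀ i, 0 < y i)
    (hx : Antitone x) (hy : Antitone y)
    (hmaj : ∀ k : ℕ, (hk : k ≤ r) →
      ∏ j : Fin k, x (Fin.castLE hk j) ≤ ∏ j : Fin k, y (Fin.castLE hk j))
    (heq : ∏ i, x i = ∏ i, y i)
    (yseq : ℕ → Fin r → ℝ) (hyseqpos : ∀ n i, 0 < yseq n i)
    (hyseqanti : ∀ n, Antitone (yseq n))
    (hyconv : ∀ i, Tendsto (fun n => yseq n i) atTop (nhds (y i))) :
    ∃ n₀ : ℕ, ∃ xseq : ℕ → Fin r → ℝ,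
      (∀ n, n₀ ≤ n → (∀ i, 0 < xseq n i) ∧ Antitone (xseq n) ∧
        (∀ k : ℕ, (hk : k ≤ r) →
          ∏ j : Fin k, xseq n (Fin.castLE hk j) ≤ ∏ j : Fin k, yseq n (Fin.castLE hk j)) ∧
        ∏ i, xseq n i = ∏ i, yseq n i) ∧
      (∀ i, Tendsto (fun n => xseq n i) atTop (nhds (x i))) := by
  classical
  -- key data
  set c : ℕ → ℝ := fun n => (Lg r (yseq n) r - Lg r y r) / r with hc
  set A : ℕ → ℕ → ℝ := fun n k => min (Lg r x k + c n * k) (Lg r (yseq n) k) with hA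
  -- full-product identity at the level of Lg
  have hcast : ∀ (v : Fin r → ℝ), (∏ i, v i) = ∏ j : Fin r, v (Fin.castLE le_rfl j) := by
    intro v; apply Finset.prod_congr rfl; intro j _; congr 1
  have hLgfull : Lg r x r = Lg r y r := by
    have h1 := prod_eq_exp x hxpos le_rfl
    have h2 := prod_eq_exp y hypos le_rfl
    have : Real.exp (Lg r x r) = Real.exp (Lg r y r) := by
      rw [← h1, ← h2, ← hcast x, ← hcast y, heq]
    exact Real.exp_injective this
  have hA0 : ∀ n, A n 0 = 0 := by
    intro n; simp [hA, Lg_zero]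
  have hAr : ∀ n, A n r = Lg r (yseq n) r := by
    intro n
    rcases Nat.eq_zero_or_pos r with hr | hr
    · subst hr; simp [hA, Lg_zero]
    · have hr0 : (r : ℝ) ≠ 0 := Nat.cast_ne_zero.mpr (by omega)
      have : Lg r x r + c n * r = Lg r (yseq n) r := by
        rw [hLgfull, hc]
        rw [div_mul_cancel₀ _ hr0]
        ring
      simp [hA, this]
  -- xseq partial products
  have hprod : ∀ n k (hk : k ≤ r),
      (∏ j : Fin k, Real.exp (A n ((Fin.castLE hk j : Fin r) + 1) - A n (Fin.castLE hk j))) =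
        Real.exp (A n k) := by
    intro n k hk
    rw [← Real.exp_sum]
    congr 1
    show (∑ j : Fin k, (A n ((j : ℕ) + 1) - A n (j : ℕ))) = A n k
    rw [Fin.sum_univ_eq_sum_range (fun j => A n (j + 1) - A n j) k,
      Finset.sum_range_sub (A n) k, hA0]
    ring
  -- discrete concavity of A n on [0, r]
  have key : ∀ a b a' b' a'' b'' : ℝ, a + a'' ≤ 2 * a' → b + b'' ≤ 2 * b' →
      min a b + min a'' b'' ≤ 2 * min a' b' := by
    intro a b a' b' a'' b'' h1 h2
    rcases le_total a' b' with h | h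
    · rw [min_eq_left h]
      exact le_trans (add_le_add (min_le_left _ _) (min_le_left _ _)) h1
    · rw [min_eq_right h]
      exact le_trans (add_le_add (min_le_right _ _) (min_le_right _ _)) h2
  have hconc : ∀ n k, k + 2 ≤ r → A n k + A n (k + 2) ≤ 2 * A n (k + 1) := by
    intro n k hk2
    have hk1 : k + 1 < r := hk2
    have hk0 : k < r := by omega
    have hxstep : Real.log (x ⟨k + 1, hk1⟩) ≤ Real.log (x ⟨k, hk0⟩) :=
      Real.log_le_log (hxpos _) (hx (by simp [Fin.le_def]))
    have hystep : Real.log (yseq n ⟨k + 1, hk1⟩) ≤ Real.log (yseq n ⟨k, hk0⟩) :=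
      Real.log_le_log (hyseqpos _ _) (hyseqanti n (by simp [Fin.le_def]))
    have hA' : ∀ m, A n m = min (Lg r x m + c n * m) (Lg r (yseq n) m) := fun m => rfl
    rw [hA' k, hA' (k + 1), hA' (k + 2)]
    apply key
    · have e1 := Lg_succ x hk0
      have e2 := Lg_succ x hk1
      push_cast
      nlinarith [e1, e2, hxstep]
    · have e1 := Lg_succ (yseq n) hk0
      have e2 := Lg_succ (yseq n) hk1
      nlinarith [e1, e2, hystep]
  -- decreasing increments
  have hincr : ∀ n (i j : ℕ), i ≤ j → j + 1 ≤ r →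
      A n (j + 1) - A n j ≤ A n (i + 1) - A n i := by
    intro n i j hij
    induction j, hij using Nat.le_induction with
    | base => intro _; exact le_refl _
    | succ m hm ih =>
      intro hm2
      have h1 : A n (m + 1 + 1) - A n (m + 1) ≤ A n (m + 1) - A n m := by
        have := hconc n m (by omega)
        linarith
      have h2 := ih (by omega)
      linarith
  -- Lg of yseq converges to Lg of y
  have hLconv : ∀ k, k ≤ r → Tendsto (fun n => Lg r (yseq n) k) atTop (nhds (Lg r y k)) := by
    intro k hk
    unfold Lg
    apply tendsto_finset_sum
    intro j hj
    have hjr : j < r := lt_of_lt_of_le (Finset.mem_range.mp hj) hk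
    simp only [dif_pos hjr]
    exact ((Real.continuousAt_log (hypos ⟨j, hjr⟩).ne').tendsto).comp (hyconv ⟨j, hjr⟩)
  have hcconv : Tendsto c atTop (nhds 0) := by
    have := ((hLconv r le_rfl).sub_const (Lg r y r)).div_const (r : ℝ)
    simpa using this
  -- Lg x k ≤ Lg r y k for k ≤ r
  have hLle : ∀ k, k ≤ r → Lg r x k ≤ Lg r y k := by
    intro k hk
    have := hmaj k hk
    rw [prod_eq_exp x hxpos hk, prod_eq_exp y hypos hk] at this
    exact (Real.exp_le_exp).mp this
  -- A n k → Lg r x k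
  have hAconv : ∀ k, k ≤ r → Tendsto (fun n => A n k) atTop (nhds (Lg r x k)) := by
    intro k hk
    have h1 : Tendsto (fun n => Lg r x k + c n * k) atTop (nhds (Lg r x k)) := by
      have := (hcconv.mul_const (k : ℝ)).const_add (Lg r x k)
      simpa using this
    have h2 := hLconv k hk
    have := h1.min h2
    rwa [min_eq_left (hLle k hk)] at this
  refine ⟨0, fun n i => Real.exp (A n ((i : ℕ) + 1) - A n (i : ℕ)), fun n _ => ?_, ?_⟩
  · refine ⟨fun i => Real.exp_pos _, ?_, ?_, ?_⟩
    · intro i j hij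
      exact Real.exp_le_exp.mpr (hincr n i j hij j.isLt)
    · intro k hk
      have hp := hprod n k hk
      calc (∏ j : Fin k, Real.exp (A n ((Fin.castLE hk j : ℕ) + 1) - A n (Fin.castLE hk j : ℕ)))
          = Real.exp (A n k) := hp
        _ ≤ Real.exp (Lg r (yseq n) k) := Real.exp_le_exp.mpr (min_le_right _ _)
        _ = ∏ j : Fin k, yseq n (Fin.castLE hk j) := (prod_eq_exp (yseq n) (hyseqpos n) hk).symm
    · have hp := hprod n r le_rfl
      calc (∏ i : Fin r, Real.exp (A n ((i : ℕ) + 1) - A n (i : ℕ)))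
          = Real.exp (A n r) := by rw [← hp]; exact hcast _
        _ = Real.exp (Lg r (yseq n) r) := by rw [hAr]
        _ = ∏ i, yseq n i := by rw [← prod_eq_exp (yseq n) (hyseqpos n) le_rfl]; exact (hcast _).symm
  · intro i
    have h1 := hAconv ((i : ℕ) + 1) i.isLt
    have h2 := hAconv (i : ℕ) (le_of_lt (lt_of_lt_of_le i.isLt (le_refl r)))
    have := (h1.sub h2)
    have hlim : Real.exp (Lg r x ((i : ℕ) + 1) - Lg r x (i : ℕ)) = x i := by
      rw [Lg_succ x i.isLt]
      simp [Real.exp_log (hxpos i)]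
    have := (Real.continuous_exp.tendsto _).comp this
    rw [hlim] at this
    exact this
end

section
/- Let D_τ, τ ∈ Ω, be a uniformly bounded continuous family of positive definite Hermitian n×n matrices on a probability space (Ω, ν) with ∫_Ω ‖D_τ^{−p}‖₁ dν(τ) < ∞ for every p > 0, where ‖·‖₁ is the trace norm. Then lim_{p→0⁺} (1/p) · log( ∫_Ω (‖D_τ^{−p}‖₁ / n) dν(τ) ) = −(1/n) ∫_Ω log det(D_τ) dν(τ). -/
/-!
Put `F p = ∫ ‖D_τ^{-p}‖₁ / n dν`. Since `F 0 = 1`, the limit is the right derivative at `0` of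
`log ∘ F`, which equals `F'(0⁺)`. Differentiating under the integral is justified by dominated
convergence: for `0 < p ≤ 1` the slope `(λ^{-p} - 1) / p` of an eigenvalue `λ` lies between the
derivative `-log λ ≥ 1 - λ` at `p = 0` and the value `λ⁻¹ - 1` at `p = 1` (Bernoulli), so it is
bounded by `κ + λ⁻¹`, integrable by the hypothesis at `p = 1`. Summing the derivatives `-log λ`
over the eigenvalues gives `-log det D_τ`.
-/

open MeasureTheory Filter Set Topology

theorem hasDerivWithinAt_integral_of_dominated_slope {Ω E : Type*} [MeasurableSpace Ω]
    {ν : Measure Ω} [NormedAddCommGroup E] [NormedSpace ℝ E] [CompleteSpace E]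
    {g : ℝ → Ω → E} {g' : Ω → E} {bound : Ω → ℝ} {s : Set ℝ} {x : ℝ}
    (hg_int : ∀ᶠ p in 𝓝[s \ {x}] x, Integrable (g p) ν) (hgx_int : Integrable (g x) ν)
    (h_bound : ∀ᶠ p in 𝓝[s \ {x}] x, ∀ᵐ τ ∂ν, ‖slope (g · τ) x p‖ ≤ bound τ)
    (bound_int : Integrable bound ν)
    (h_diff : ∀ᵐ τ ∂ν, HasDerivWithinAt (g · τ) (g' τ) s x) :
    HasDerivWithinAt (fun p => ∫ τ, g p τ ∂ν) (∫ τ, g' τ ∂ν) s x := by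
  have slope_integral : ∀ᶠ p in 𝓝[s \ {x}] x,
      ∫ τ, slope (g · τ) x p ∂ν = slope (fun p => ∫ τ, g p τ ∂ν) x p := by
    filter_upwards [hg_int] with p hp
    simp only [slope_def_module]
    rw [integral_smul, integral_sub hp hgx_int]
  rw [hasDerivWithinAt_iff_tendsto_slope]
  refine (tendsto_integral_filter_of_dominated_convergence bound ?_ h_bound bound_int ?_).congr'
    slope_integral
  · filter_upwards [hg_int] with p hp
    exact ((hp.sub hgx_int).smul (p - x)⁻¹).aestronglyMeasurable
  · filter_upwards [h_diff] with τ hτ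
    exact hasDerivWithinAt_iff_tendsto_slope.mp hτ

theorem abs_rpow_neg_sub_one_div_le {l p : ℝ} (hl : 0 < l) (hp : 0 < p) (hp1 : p ≤ 1) :
    |(l ^ (-p) - 1) / p| ≤ l + l⁻¹ := by
  have lower : -p * Real.log l ≤ l ^ (-p) - 1 := by
    simpa [Real.log_rpow hl] using Real.log_le_sub_one_of_pos (Real.rpow_pos_of_pos hl (-p))
  have upper : l ^ (-p) ≤ 1 + p * (l⁻¹ - 1) := by
    have := rpow_one_add_le_one_add_mul_self (s := l⁻¹ - 1) (by linarith [inv_pos.mpr hl]) hp.le hp1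
    rwa [add_sub_cancel, Real.inv_rpow hl.le, ← Real.rpow_neg hl.le] at this
  have hlog : Real.log l ≤ l - 1 := Real.log_le_sub_one_of_pos hl
  rw [abs_le, le_div_iff₀ hp, div_le_iff₀ hp]
  constructor <;> nlinarith [inv_pos.mpr hl]

theorem hasDerivAt_sum_rpow_neg {ι : Type*} [Fintype ι] {l : ι → ℝ} (hl : ∀ i, 0 < l i) :
    HasDerivAt (fun p : ℝ => ∑ i, l i ^ (-p)) (-Real.log (∏ i, l i)) 0 := by
  rw [Real.log_prod fun i _ => (hl i).ne', ← Finset.sum_neg_distrib]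
  refine HasDerivAt.fun_sum fun i _ => ?_
  simpa [Function.comp_def] using
    (Real.hasStrictDerivAt_const_rpow (hl i) (-0)).hasDerivAt.comp 0 (hasDerivAt_neg 0)

theorem abs_slope_sum_rpow_neg_le {ι : Type*} [Fintype ι] {l : ι → ℝ} (hl : ∀ i, 0 < l i)
    {p : ℝ} (hp : 0 < p) (hp1 : p ≤ 1) :
    |slope (fun p : ℝ => ∑ i, l i ^ (-p)) 0 p| ≤ ∑ i, (l i + (l i)⁻¹) := by
  simp only [slope_def_field, neg_zero, Real.rpow_zero, sub_zero, ← Finset.sum_sub_distrib,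
    Finset.sum_div]
  exact (Finset.abs_sum_le_sum_abs _ _).trans
    (Finset.sum_le_sum fun i _ => abs_rpow_neg_sub_one_div_le (hl i) hp hp1)

theorem log_det_limit_general {Ω : Type*} [MeasurableSpace Ω] (ν : Measure Ω)
    [IsProbabilityMeasure ν] {n : ℕ} (hn : 0 < n)
    (D : Ω → Matrix (Fin n) (Fin n) ℂ) (hD : ∀ τ, (D τ).IsHermitian)
    (hpos : ∀ τ i, 0 < (hD τ).eigenvalues i)
    (hbdd : ∃ κ : ℝ, ∀ τ i, (hD τ).eigenvalues i ≤ κ)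
    (hint : ∀ p : ℝ, 0 < p →
      Integrable (fun τ => ∑ i, (hD τ).eigenvalues i ^ (-p)) ν) :
    Tendsto (fun p : ℝ =>
        (1 / p) * Real.log (∫ τ, (∑ i, (hD τ).eigenvalues i ^ (-p)) / n ∂ν))
      (nhdsWithin 0 (Set.Ioi 0))
      (nhds (-(1 / (n : ℝ)) * ∫ τ, Real.log (∏ i, (hD τ).eigenvalues i) ∂ν)) := by
  obtain ⟨κ, hκ⟩ := hbdd
  set F : ℝ → ℝ := fun p => ∫ τ, (∑ i, (hD τ).eigenvalues i ^ (-p)) / n ∂ν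
  have trace_deriv : HasDerivWithinAt (fun p : ℝ => ∫ τ, ∑ i, (hD τ).eigenvalues i ^ (-p) ∂ν)
      (∫ τ, -Real.log (∏ i, (hD τ).eigenvalues i) ∂ν) (Ioi 0) 0 := by
    refine hasDerivWithinAt_integral_of_dominated_slope
      (bound := fun τ => n * κ + ∑ i, (hD τ).eigenvalues i ^ (-1 : ℝ)) ?_ ?_ ?_
      ((integrable_const _).add (hint 1 one_pos))
      (ae_of_all _ fun τ => (hasDerivAt_sum_rpow_neg (hpos τ)).hasDerivWithinAt)
    · rw [sdiff_singleton_eq_self self_notMem_Ioi]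
      filter_upwards [self_mem_nhdsWithin] with p hp using hint p hp
    · simp
    · rw [sdiff_singleton_eq_self self_notMem_Ioi]
      filter_upwards [Ioc_mem_nhdsGT zero_lt_one] with p hp
      refine ae_of_all _ fun τ => (abs_slope_sum_rpow_neg_le (hpos τ) hp.1 hp.2).trans ?_
      simpa [Finset.sum_add_distrib, Real.rpow_neg_one] using
        Finset.sum_le_sum fun i (_ : i ∈ Finset.univ) => hκ τ i
  have hF0 : F 0 = 1 := by
    simp [F, (Nat.cast_pos.mpr hn).ne']
  have hF_deriv : HasDerivWithinAt F
      (-(1 / (n : ℝ)) * ∫ τ, Real.log (∏ i, (hD τ).eigenvalues i) ∂ν) (Ioi 0) 0 := by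
    have hF : F = fun p => (∫ τ, ∑ i, (hD τ).eigenvalues i ^ (-p) ∂ν) / n :=
      funext fun p => integral_div _ _
    rw [hF]
    exact (trace_deriv.div_const _).congr_deriv (by rw [integral_neg]; ring)
  have hlog := hF_deriv.log (by simp [hF0])
  rw [hasDerivWithinAt_iff_tendsto_slope' self_notMem_Ioi, hF0, div_one] at hlog
  refine hlog.congr fun p => ?_
  rw [slope_def_field, hF0, Real.log_one, sub_zero, sub_zero, div_eq_inv_mul, one_div]

/-- Log-determinant limit: for a family `D_τ` of positive definite Hermitian matrices
over a probability space with `∫ ‖D_τ^{-p}‖₁ dν < ∞` for all `p > 0`,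
`lim_{p→0⁺} (1/p) log(∫ (‖D_τ^{-p}‖₁/n) dν) = -(1/n) ∫ log det(D_τ) dν`,
where `‖D_τ^{-p}‖₁ = Σᵢ λᵢ(D_τ)^{-p}` and `det D_τ = ∏ᵢ λᵢ(D_τ)`. -/
theorem log_det_limit {Ω : Type*} [MeasurableSpace Ω] (ν : Measure Ω)
    [IsProbabilityMeasure ν] {n : ℕ} (hn : 0 < n)
    (D : Ω → Matrix (Fin n) (Fin n) ℂ) (hD : ∀ τ, (D τ).IsHermitian)
    (hpos : ∀ τ i, 0 < (hD τ).eigenvalues i)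
    (hbdd : ∃ κ : ℝ, ∀ τ i, (hD τ).eigenvalues i ≤ κ)
    (hint : ∀ p : ℝ, 0 < p →
      Integrable (fun τ => ∑ i, (hD τ).eigenvalues i ^ (-p)) ν)
    (hintlog : Integrable (fun τ => Real.log (∏ i, (hD τ).eigenvalues i)) ν) :
    Tendsto (fun p : ℝ =>
        (1 / p) * Real.log (∫ τ, (∑ i, (hD τ).eigenvalues i ^ (-p)) / n ∂ν))
      (nhdsWithin 0 (Set.Ioi 0))
      (nhds (-(1 / (n : ℝ)) * ∫ τ, Real.log (∏ i, (hD τ).eigenvalues i) ∂ν)) :=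
  log_det_limit_general ν hn D hD hpos hbdd hint
end

section
/- Let X be an n×n Hermitian matrix satisfying X^p ⪯ (p!/2)·A² in the Loewner order for every integer p ≥ 2, where A is a fixed Hermitian matrix. Then for every t ∈ (0,1): exp(tX) ⪯ I + tX + (t²/(2(1−t)))·A². -/
/-!
Expanding `exp (t • X) = 1 + t • X + ∑_{p ≥ 2} (t ^ p / p!) • X ^ p`, the hypothesis bounds the
`p`-th term by `(t ^ p / 2) • A ^ 2`, and these bounds sum to the geometric series
`(t ^ 2 / (2 * (1 - t))) • A ^ 2`. The series may be compared termwise because the Loewner order is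
closed.
-/

open scoped ComplexOrder MatrixOrder Nat
open NormedSpace

theorem Matrix.isClosed_setOf_posSemidef {n R : Type*} [Fintype n] [Ring R] [PartialOrder R]
    [StarRing R] [TopologicalSpace R] [IsTopologicalRing R] [ContinuousStar R]
    [OrderClosedTopology R] :
    IsClosed {M : Matrix n n R | M.PosSemidef} := by
  simp only [Matrix.posSemidef_iff_dotProduct_mulVec, Set.ofPred_and, Set.ofPred_forall]
  refine (isClosed_eq (by fun_prop) continuous_id).inter (isClosed_iInter fun x => ?_)
  exact isClosed_le continuous_const (by fun_prop)

theorem Matrix.orderClosedTopology {n 𝕜 : Type*} [Fintype n] [RCLike 𝕜] :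
    OrderClosedTopology (Matrix n n 𝕜) where
  isClosed_le' := isClosed_le_of_isClosed_nonneg <| by
    simpa only [Matrix.nonneg_iff_posSemidef] using Matrix.isClosed_setOf_posSemidef

section ExpBound

variable {𝔸 : Type*} [NormedRing 𝔸] [NormedAlgebra ℝ 𝔸] [CompleteSpace 𝔸]

theorem hasSum_exp_smul_sub_one_sub (t : ℝ) (x : 𝔸) :
    HasSum (fun p : ℕ => (t ^ (p + 2) / (p + 2)!) • x ^ (p + 2)) (exp (t • x) - 1 - t • x) := by
  have h := (hasSum_nat_add_iff' 2).mpr (exp_series_hasSum_exp' (𝕂 := ℝ) (t • x))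
  simpa [Finset.sum_range_succ, smul_pow, smul_smul, div_eq_inv_mul, sub_sub] using h

variable [PartialOrder 𝔸] [IsOrderedAddMonoid 𝔸] [OrderClosedTopology 𝔸] [PosSMulMono ℝ 𝔸]

theorem exp_smul_le_of_pow_le {x b : 𝔸} (hpow : ∀ p : ℕ, 2 ≤ p → x ^ p ≤ ((p ! : ℝ) / 2) • b)
    {t : ℝ} (ht0 : 0 < t) (ht1 : t < 1) :
    exp (t • x) ≤ 1 + t • x + (t ^ 2 / (2 * (1 - t))) • b := by
  have hgeom : HasSum (fun p : ℕ => (t ^ 2 / 2 * t ^ p) • b) ((t ^ 2 / (2 * (1 - t))) • b) := by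
    convert ((hasSum_geometric_of_lt_one ht0.le ht1).mul_left (t ^ 2 / 2)).smul_const b using 2
    field_simp
  have hterm (p : ℕ) : (t ^ (p + 2) / (p + 2)!) • x ^ (p + 2) ≤ (t ^ 2 / 2 * t ^ p) • b :=
    calc (t ^ (p + 2) / (p + 2)!) • x ^ (p + 2)
        ≤ (t ^ (p + 2) / (p + 2)!) • (((p + 2)! / 2 : ℝ) • b) :=
          smul_le_smul_of_nonneg_left (by exact_mod_cast hpow (p + 2) le_add_self) (by positivity)
      _ = (t ^ 2 / 2 * t ^ p) • b := by
          rw [smul_smul]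
          congr 1
          field_simp
          ring
  have htail := hasSum_le hterm (hasSum_exp_smul_sub_one_sub t x) hgeom
  rwa [sub_sub, sub_le_iff_le_add'] at htail

end ExpBound

theorem exp_subexponential_bound_general {n : ℕ}
    {X A : Matrix (Fin n) (Fin n) ℂ}
    (hmom : ∀ p : ℕ, 2 ≤ p →
      (((p.factorial : ℝ) / 2) • (A ^ 2) - X ^ p).PosSemidef)
    (t : ℝ) (ht0 : 0 < t) (ht1 : t < 1) :
    ((1 : Matrix (Fin n) (Fin n) ℂ) + t • X + (t ^ 2 / (2 * (1 - t))) • (A ^ 2) -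
        NormedSpace.exp (t • X)).PosSemidef :=
  -- Any algebra norm inducing the entrywise topology serves to sum the exponential series.
  @exp_smul_le_of_pow_le _ Matrix.linftyOpNormedRing Matrix.linftyOpNormedAlgebra
    (inferInstanceAs (CompleteSpace (Fin n → Fin n → ℂ))) _ _ Matrix.orderClosedTopology _ X (A ^ 2)
    hmom t ht0 ht1

/-- If a Hermitian matrix `X` satisfies `X^p ⪯ (p!/2) A²` in the Loewner order for
every integer `p ≥ 2`, then for every `t ∈ (0,1)`:
`exp(tX) ⪯ I + tX + (t²/(2(1-t))) A²`. -/
theorem exp_subexponential_bound {n : ℕ}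
    {X A : Matrix (Fin n) (Fin n) ℂ} (hX : X.IsHermitian) (hA : A.IsHermitian)
    (hmom : ∀ p : ℕ, 2 ≤ p →
      (((p.factorial : ℝ) / 2) • (A ^ 2) - X ^ p).PosSemidef)
    (t : ℝ) (ht0 : 0 < t) (ht1 : t < 1) :
    ((1 : Matrix (Fin n) (Fin n) ℂ) + t • X + (t ^ 2 / (2 * (1 - t))) • (A ^ 2) -
        NormedSpace.exp (t • X)).PosSemidef :=
  exp_subexponential_bound_general hmom t ht0 ht1
end
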